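/- Match soundness: If the matching judgment match(p̄, m̄) ⇓ (m̄_r, σ) holds for a sequence of join patterns p̄ (with p_i = x_i⟨ȳ_i⟩), a sequence of message values m̄, a residual sequence m̄_r, and a substitution σ, then there exists a sequence of consumed messages m̄_c such that (1) m̄_r concatenated with m̄_c equals m̄ up to permutation, (2) m̄_c has the same length as p̄ and each m_{c,i} = x_i⟨v̄_i⟩ where v̄_i has the same length as ȳ_i, and (3) σ = [ȳ_i := v̄_i for 1 ≤ i ≤ k] where k is the length of p̄. -/

import Mathlib

set_option linter.unusedVariables false

namespace CPL

/-! ### Types of CPL -/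

/-- Types `T ::= Top | Unit | α | ⟨T̄⟩ | srv{x̄:T̄} | srv⊥ | inst T | img T | ∀α<:T.T`. -/
inductive Ty : Type
  | top : Ty
  | unit : Ty
  | tvar : ℕ → Ty
  | svc : List Ty → Ty
  | srv : List (ℕ × Ty) → Ty
  | srvBot : Ty
  | inst : Ty → Ty
  | img : Ty → Ty
  | univ : ℕ → Ty → Ty → Ty

theorem Prod.sizeOf_snd_lt {α β} [SizeOf α] [SizeOf β] (p : α × β) :
    sizeOf p.2 < sizeOf p := by
  obtain ⟨a, b⟩ := p; simp only [Prod.mk.sizeOf_spec]; omega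

/-- Type substitution `T[α := S]` (naive/capture-avoiding under the variable convention). -/
def tsubstTy (a : ℕ) (S : Ty) : Ty → Ty
  | .top => .top
  | .unit => .unit
  | .tvar b => if b = a then S else .tvar b
  | .svc Ts => .svc (Ts.attach.map (fun t =>
      have := List.sizeOf_lt_of_mem t.2
      tsubstTy a S t.1))
  | .srv sig => .srv (sig.attach.map (fun p =>
      have h1 := List.sizeOf_lt_of_mem p.2
      have h2 := Prod.sizeOf_snd_lt p.1
      (p.1.1, tsubstTy a S p.1.2)))
  | .srvBot => .srvBot
  | .inst T => .inst (tsubstTy a S T)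
  | .img T => .img (tsubstTy a S T)
  | .univ b B T => .univ b (tsubstTy a S B) (if b = a then T else tsubstTy a S T)
termination_by e => sizeOf e
decreasing_by
  all_goals simp_wf
  all_goals omega

/-- Free type variables of a type. -/
def ftvTy : Ty → List ℕ
  | .top => []
  | .unit => []
  | .srvBot => []
  | .tvar b => [b]
  | .svc Ts => Ts.attach.flatMap (fun t =>
      have := List.sizeOf_lt_of_mem t.2
      ftvTy t.1)
  | .srv sig => sig.attach.flatMap (fun p =>
      have h1 := List.sizeOf_lt_of_mem p.2
      have h2 := Prod.sizeOf_snd_lt p.1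
      ftvTy p.1.2)
  | .inst T => ftvTy T
  | .img T => ftvTy T
  | .univ b B T => ftvTy B ++ (ftvTy T).filter (· ≠ b)
termination_by e => sizeOf e
decreasing_by
  all_goals simp_wf
  all_goals omega

/-! ### Expressions -/

/-- A typed join pattern `x⟨y₁:T₁ … y_k:T_k⟩`. -/
abbrev TPat : Type := ℕ × List (ℕ × Ty)

/-- Expressions of CPL.  A reaction rule `p̄ ▷ e` is a pair of a list of
typed join patterns and a body; `self` is the paper's `this`;
`img rules buf` is a server image `(srv(r̄), m̄)`; `zero` is `0`. -/
inductive Expr : Type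
  | var : ℕ → Expr
  | self : Expr
  | srv : List (List TPat × Expr) → Expr
  | spwn : Expr → Expr
  | svc : Expr → ℕ → Expr
  | req : Expr → List Expr → Expr
  | par : List Expr → Expr
  | snap : Expr → Expr
  | repl : Expr → Expr → Expr
  | addr : ℕ → Expr
  | img : List (List TPat × Expr) → List (ℕ × List Expr) → Expr
  | zero : Expr
  | tabs : ℕ → Ty → Expr → Expr
  | tapp : Expr → Ty → Expr

noncomputable instance : DecidableEq Expr := Classical.decEq _
noncomputable instance : DecidableEq Ty := Classical.decEq _

/-- A reaction rule. -/
abbrev Rule : Type := List TPat × Expr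

/-- A message value `x⟨v̄⟩` (the arguments are expressions, intended to be values). -/
abbrev Msg : Type := ℕ × List Expr

/-- The term variables bound by the patterns of a rule. -/
def patVars (ps : List TPat) : List ℕ := ps.flatMap (fun p => p.2.map Prod.fst)

/-- Values `v ::= srv(r̄) | i | i#x | par(ε) | (srv(r̄), m̄) | 0 | Λα<:T.e`. -/
inductive IsValue : Expr → Prop
  | srv (rules : List Rule) : IsValue (.srv rules)
  | addr (i : ℕ) : IsValue (.addr i)
  | svcRef (i : ℕ) (x : ℕ) : IsValue (.svc (.addr i) x)
  | parNil : IsValue (.par [])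
  | img (rules : List Rule) (buf : List Msg) : IsValue (.img rules buf)
  | zero : IsValue .zero
  | tabs (a : ℕ) (T : Ty) (e : Expr) : IsValue (.tabs a T e)

/-! ### Term substitution -/

/-- Capture-avoiding substitution `e[x := v]` of a term variable
(under the variable convention; rule parameters shadow). -/
def subst (x : ℕ) (v : Expr) : Expr → Expr
  | .var y => if y = x then v else .var y
  | .self => .self
  | .srv rules => .srv (rules.attach.map (fun r =>
      have h1 := List.sizeOf_lt_of_mem r.2
      have h2 := Prod.sizeOf_snd_lt r.1
      (r.1.1, if x ∈ patVars r.1.1 then r.1.2 else subst x v r.1.2)))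
  | .spwn e => .spwn (subst x v e)
  | .svc e y => .svc (subst x v e) y
  | .req e args => .req (subst x v e) (args.attach.map (fun t =>
      have := List.sizeOf_lt_of_mem t.2
      subst x v t.1))
  | .par es => .par (es.attach.map (fun t =>
      have := List.sizeOf_lt_of_mem t.2
      subst x v t.1))
  | .snap e => .snap (subst x v e)
  | .repl e1 e2 => .repl (subst x v e1) (subst x v e2)
  | .addr i => .addr i
  | .img rules buf =>
      .img (rules.attach.map (fun r =>
          have h1 := List.sizeOf_lt_of_mem r.2
          have h2 := Prod.sizeOf_snd_lt r.1
          (r.1.1, if x ∈ patVars r.1.1 then r.1.2 else subst x v r.1.2)))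
        (buf.attach.map (fun m =>
          have h1 := List.sizeOf_lt_of_mem m.2
          have h2 := Prod.sizeOf_snd_lt m.1
          (m.1.1, m.1.2.attach.map (fun w =>
            have h3 := List.sizeOf_lt_of_mem w.2
            subst x v w.1))))
  | .zero => .zero
  | .tabs a T e => .tabs a T (subst x v e)
  | .tapp e T => .tapp (subst x v e) T
termination_by e => sizeOf e
decreasing_by
  all_goals simp_wf
  all_goals omega

/-- Free term variables of an expression (`this` and addresses are not term variables). -/
def fv : Expr → List ℕ
  | .var y => [y]
  | .self => []
  | .srv rules => rules.attach.flatMap (fun r =>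
      have h1 := List.sizeOf_lt_of_mem r.2
      have h2 := Prod.sizeOf_snd_lt r.1
      (fv r.1.2).filter (· ∉ patVars r.1.1))
  | .spwn e => fv e
  | .svc e _ => fv e
  | .req e args => fv e ++ args.attach.flatMap (fun t =>
      have := List.sizeOf_lt_of_mem t.2
      fv t.1)
  | .par es => es.attach.flatMap (fun t =>
      have := List.sizeOf_lt_of_mem t.2
      fv t.1)
  | .snap e => fv e
  | .repl e1 e2 => fv e1 ++ fv e2
  | .addr _ => []
  | .img rules buf =>
      (rules.attach.flatMap (fun r =>
        have h1 := List.sizeOf_lt_of_mem r.2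
        have h2 := Prod.sizeOf_snd_lt r.1
        (fv r.1.2).filter (· ∉ patVars r.1.1))) ++
      (buf.attach.flatMap (fun m =>
        have h1 := List.sizeOf_lt_of_mem m.2
        have h2 := Prod.sizeOf_snd_lt m.1
        m.1.2.attach.flatMap (fun w =>
          have h3 := List.sizeOf_lt_of_mem w.2
          fv w.1)))
  | .zero => []
  | .tabs _ _ e => fv e
  | .tapp e _ => fv e
termination_by e => sizeOf e
decreasing_by
  all_goals simp_wf
  all_goals omega

/-- Type substitution applied to an expression (in all type annotations,
respecting the type-variable binder of `Λ`). -/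
def tsubstExpr (a : ℕ) (S : Ty) : Expr → Expr
  | .var y => .var y
  | .self => .self
  | .srv rules => .srv (rules.attach.map (fun r =>
      have h1 := List.sizeOf_lt_of_mem r.2
      have h2 := Prod.sizeOf_snd_lt r.1
      (r.1.1.map (fun p => (p.1, p.2.map (fun q => (q.1, tsubstTy a S q.2)))),
        tsubstExpr a S r.1.2)))
  | .spwn e => .spwn (tsubstExpr a S e)
  | .svc e y => .svc (tsubstExpr a S e) y
  | .req e args => .req (tsubstExpr a S e) (args.attach.map (fun t =>
      have := List.sizeOf_lt_of_mem t.2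
      tsubstExpr a S t.1))
  | .par es => .par (es.attach.map (fun t =>
      have := List.sizeOf_lt_of_mem t.2
      tsubstExpr a S t.1))
  | .snap e => .snap (tsubstExpr a S e)
  | .repl e1 e2 => .repl (tsubstExpr a S e1) (tsubstExpr a S e2)
  | .addr i => .addr i
  | .img rules buf =>
      .img (rules.attach.map (fun r =>
          have h1 := List.sizeOf_lt_of_mem r.2
          have h2 := Prod.sizeOf_snd_lt r.1
          (r.1.1.map (fun p => (p.1, p.2.map (fun q => (q.1, tsubstTy a S q.2)))),
            tsubstExpr a S r.1.2)))
        (buf.attach.map (fun m =>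
          have h1 := List.sizeOf_lt_of_mem m.2
          have h2 := Prod.sizeOf_snd_lt m.1
          (m.1.1, m.1.2.attach.map (fun w =>
            have h3 := List.sizeOf_lt_of_mem w.2
            tsubstExpr a S w.1))))
  | .zero => .zero
  | .tabs b B e =>
      .tabs b (tsubstTy a S B) (if b = a then e else tsubstExpr a S e)
  | .tapp e T => .tapp (tsubstExpr a S e) (tsubstTy a S T)
termination_by e => sizeOf e
decreasing_by
  all_goals simp_wf
  all_goals omega

/-! ### Matching of join patterns against message buffers -/

/-- A substitution produced by matching: a finite map from variables to values. -/
abbrev VSubst : Type := ℕ → Option Expr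

/-- The empty substitution `∅`. -/
def emptyVS : VSubst := fun _ => none

/-- Union of two substitutions (left-biased; used with disjoint domains). -/
def unionVS (σ1 σ2 : VSubst) : VSubst := fun y => (σ1 y).orElse (fun _ => σ2 y)

/-- The substitution `[x_i := v_i | 1 ≤ i ≤ k]`. -/
def mkVS (ys : List ℕ) (vs : List Expr) : VSubst := fun y => (ys.zip vs).lookup y

/-- The domain of a substitution. -/
def domVS (σ : VSubst) : Set ℕ := {y | σ y ≠ none}

/-- An untyped join pattern `x⟨x₁…x_k⟩`. -/
abbrev Pat : Type := ℕ × List ℕ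

/-- The CPL matching judgment `match(p̄, m̄) ⇓ (m̄_r, σ)`, with rules
(Match₀) and (Match₁). -/
inductive Match : List Pat → List Msg → List Msg → VSubst → Prop
  | nil (ms : List Msg) : Match [] ms ms emptyVS
  | cons {x : ℕ} {ys : List ℕ} {ps : List Pat} {m1 m2 mr : List Msg}
      {vs : List Expr} {σr : VSubst} :
      vs.length = ys.length →
      Match ps (m1 ++ m2) mr σr →
      (Disjoint (domVS (mkVS ys vs)) (domVS σr)) →
      Match ((x, ys) :: ps) (m1 ++ (x, vs) :: m2) mr (unionVS (mkVS ys vs) σr)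

/-- The combined substitution `[ȳ_i := v̄_i for 1 ≤ i ≤ k]` built from the
patterns `p̄` and the consumed messages `m̄_c`. -/
def multiVS (ps : List Pat) (mc : List Msg) : VSubst :=
  List.foldr (fun (q : Pat × Msg) acc => unionVS (mkVS q.1.2 q.2.2) acc)
    emptyVS (ps.zip mc)

/-! ### Typing contexts, subtyping and typing -/

/-- Context entries: type-variable bounds `α <: T`, term variables `x : T`,
and `this : T`. Contexts grow at the head. -/
inductive CEntry : Type
  | tvarB : ℕ → Ty → CEntry
  | varB : ℕ → Ty → CEntry
  | thisB : Ty → CEntry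

abbrev Ctx : Type := List CEntry

/-- Look up a term variable in a context (most recent binding first). -/
def lookupVar : Ctx → ℕ → Option Ty
  | [], _ => none
  | .varB y T :: Γ, x => if y = x then some T else lookupVar Γ x
  | _ :: Γ, x => lookupVar Γ x

/-- Look up the type of `this`. -/
def lookupThis : Ctx → Option Ty
  | [] => none
  | .thisB T :: _ => some T
  | _ :: Γ => lookupThis Γ

/-- Look up the bound of a type variable. -/
def lookupTVar : Ctx → ℕ → Option Ty
  | [], _ => none
  | .tvarB b T :: Γ, a => if b = a then some T else lookupTVar Γ a
  | _ :: Γ, a => lookupTVar Γ a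

/-- The type variables declared in a context, `ftv(Γ)`. -/
def ctxTVars (Γ : Ctx) : List ℕ :=
  Γ.filterMap (fun c => match c with | .tvarB a _ => some a | _ => none)

/-- Type substitution applied to a context entry. -/
def tsubstEntry (a : ℕ) (S : Ty) : CEntry → CEntry
  | .tvarB b B => .tvarB b (tsubstTy a S B)
  | .varB y T => .varB y (tsubstTy a S T)
  | .thisB T => .thisB (tsubstTy a S T)

/-- The CPL subtyping judgment `Γ ⊢ T <: U`. -/
inductive Sub : Ctx → Ty → Ty → Prop
  | top {Γ T} : Sub Γ T .top
  | tvar {Γ a T} : lookupTVar Γ a = some T → Sub Γ (.tvar a) T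
  | srv {Γ} {sig1 sig2 : List (ℕ × Ty)} (f : Fin sig2.length → Fin sig1.length) :
      (∀ j, (sig1.get (f j)).1 = (sig2.get j).1) →
      (∀ j, Sub Γ (sig1.get (f j)).2 (sig2.get j).2) →
      Sub Γ (.srv sig1) (.srv sig2)
  | srvBot {Γ} {sig : List (ℕ × Ty)} : Sub Γ .srvBot (.srv sig)
  | inst {Γ T U} : Sub Γ T U → Sub Γ (.inst T) (.inst U)
  | img {Γ T U} : Sub Γ T U → Sub Γ (.img T) (.img U)
  | svc {Γ} {Ts Us : List Ty} (hl : Us.length = Ts.length) :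
      (∀ k : Fin Us.length, Sub Γ (Us.get k) (Ts.get (k.cast hl))) →
      Sub Γ (.svc Ts) (.svc Us)
  | univ {Γ a1 a2 T U1 U2} :
      Sub (.tvarB a1 T :: Γ) U1 (tsubstTy a2 (.tvar a1) U2) →
      Sub Γ (.univ a1 T U1) (.univ a2 T U2)
  | refl {Γ T} : Sub Γ T T
  | trans {Γ T1 T2 T3} : Sub Γ T1 T2 → Sub Γ T2 T3 → Sub Γ T1 T3

/-- Location typings `Σ`, mapping addresses to (image) types. -/
abbrev LTy : Type := ℕ → Option Ty

/-- Extension of location typings: `Σ ⊆ Σ'`. -/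
def LTyLE (L L' : LTy) : Prop := ∀ i T, L i = some T → L' i = some T

/-- The CPL typing judgment `Γ | Σ ⊢ e : T`. -/
inductive HasTy : Ctx → LTy → Expr → Ty → Prop
  | var {Γ L x T} : lookupVar Γ x = some T → HasTy Γ L (.var x) T
  | this {Γ L T} : lookupThis Γ = some T → HasTy Γ L .self T
  | par {Γ L} {es : List Expr} :
      (∀ e ∈ es, HasTy Γ L e .unit) → HasTy Γ L (.par es) .unit
  | srv {Γ L} {rules : List Rule} {sig : List (ℕ × Ty)} :
      (sig.map Prod.fst).Nodup →
      (∀ r ∈ rules, ∀ p ∈ r.1,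
        List.lookup p.1 sig = some (.svc (p.2.map Prod.snd))) →
      (∀ s ∈ sig, ∃ r ∈ rules, ∃ p ∈ r.1, p.1 = s.1) →
      (∀ r ∈ rules, (patVars r.1).Nodup) →
      ftvTy (.srv sig) ⊆ ctxTVars Γ →
      (∀ r ∈ rules,
        HasTy (.thisB (.srv sig) ::
          ((r.1.flatMap (fun p => p.2)).map (fun q => .varB q.1 q.2)) ++ Γ)
          L r.2 .unit) →
      HasTy Γ L (.srv rules) (.srv sig)
  | zero {Γ L} : HasTy Γ L .zero (.img .srvBot)
  | img {Γ L} {rules : List Rule} {buf : List Msg} {T : Ty}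
      (g : Fin buf.length → Fin rules.length)
      (gp : (j : Fin buf.length) → Fin (rules.get (g j)).1.length) :
      HasTy Γ L (.srv rules) T →
      (∀ j, ((rules.get (g j)).1.get (gp j)).1 = (buf.get j).1) →
      ∀ (hlen : ∀ j, (buf.get j).2.length =
          ((rules.get (g j)).1.get (gp j)).2.length),
      (∀ (j : Fin buf.length) (k : Fin (buf.get j).2.length),
        HasTy Γ L ((buf.get j).2.get k)
          (((rules.get (g j)).1.get (gp j)).2.get (k.cast (hlen j))).2) →
      HasTy Γ L (.img rules buf) (.img T)
  | snap {Γ L e T} : HasTy Γ L e (.inst T) → HasTy Γ L (.snap e) (.img T)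
  | repl {Γ L e1 e2 T} :
      HasTy Γ L e1 (.inst T) → HasTy Γ L e2 (.img T) →
      HasTy Γ L (.repl e1 e2) .unit
  | spwn {Γ L e T} : HasTy Γ L e (.img T) → HasTy Γ L (.spwn e) (.inst T)
  | inst {Γ L i T} : L i = some (.img T) → HasTy Γ L (.addr i) (.inst T)
  | svc {Γ L e x} {sig : List (ℕ × Ty)} {T : Ty} :
      HasTy Γ L e (.inst (.srv sig)) → List.lookup x sig = some T →
      HasTy Γ L (.svc e x) T
  | req {Γ L e} {args : List Expr} {Ts : List Ty} (hl : args.length = Ts.length) :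
      HasTy Γ L e (.svc Ts) →
      (∀ k : Fin args.length, HasTy Γ L (args.get k) (Ts.get (k.cast hl))) →
      HasTy Γ L (.req e args) .unit
  | tabs {Γ L a T e U} :
      HasTy (.tvarB a T :: Γ) L e U →
      HasTy Γ L (.tabs a T e) (.univ a T U)
  | tapp {Γ L e a T1 T2 U} :
      HasTy Γ L e (.univ a T2 U) → Sub Γ T1 T2 →
      ftvTy T1 ⊆ ctxTVars Γ →
      HasTy Γ L (.tapp e T1) (tsubstTy a T1 U)
  | sub {Γ L e T U} : HasTy Γ L e T → Sub Γ T U → HasTy Γ L e U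

/-! ### Operational semantics -/

/-- Evaluation contexts `E`. -/
inductive ECtx : Type
  | hole : ECtx
  | spwn : ECtx → ECtx
  | svc : ECtx → ℕ → ECtx
  | reqFun : ECtx → List Expr → ECtx
  | reqArg : Expr → List Expr → ECtx → List Expr → ECtx
  | par : List Expr → ECtx → List Expr → ECtx
  | snap : ECtx → ECtx
  | repl1 : ECtx → Expr → ECtx
  | repl2 : Expr → ECtx → ECtx
  | tapp : ECtx → Ty → ECtx

/-- Plugging an expression into the hole of an evaluation context. -/
def ECtx.plug : ECtx → Expr → Expr
  | .hole, e => e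
  | .spwn E, e => .spwn (E.plug e)
  | .svc E x, e => .svc (E.plug e) x
  | .reqFun E args, e => .req (E.plug e) args
  | .reqArg f pre E post, e => .req f (pre ++ E.plug e :: post)
  | .par pre E post, e => .par (pre ++ E.plug e :: post)
  | .snap E, e => .snap (E.plug e)
  | .repl1 E e2, e => .repl (E.plug e) e2
  | .repl2 e1 E, e => .repl e1 (E.plug e)
  | .tapp E T, e => .tapp (E.plug e) T

/-- Routing tables `μ`: finite maps from addresses to server images
(`img rules buf` or `zero`). -/
abbrev RT : Type := ℕ → Option Expr

/-- A server image value: `0` or `(srv(r̄), m̄)`. -/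
def IsImage (s : Expr) : Prop :=
  s = .zero ∨ ∃ (rules : List Rule) (buf : List Msg), s = .img rules buf

/-- Strip the type annotations of a list of typed join patterns. -/
def stripPats (ps : List TPat) : List Pat := ps.map (fun p => (p.1, p.2.map Prod.fst))

/-- Apply a matching substitution `σ` (and an optional replacement `th` for
`this`) to an expression; server templates rebind `this` and their pattern
variables. -/
def msubst (σ : VSubst) (th : Option Expr) : Expr → Expr
  | .var y => (σ y).getD (.var y)
  | .self => th.getD .self
  | .srv rules => .srv (rules.attach.map (fun r =>
      have h1 := List.sizeOf_lt_of_mem r.2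
      have h2 := Prod.sizeOf_snd_lt r.1
      (r.1.1, msubst (fun y => if y ∈ patVars r.1.1 then none else σ y) none r.1.2)))
  | .spwn e => .spwn (msubst σ th e)
  | .svc e y => .svc (msubst σ th e) y
  | .req e args => .req (msubst σ th e) (args.attach.map (fun t =>
      have := List.sizeOf_lt_of_mem t.2
      msubst σ th t.1))
  | .par es => .par (es.attach.map (fun t =>
      have := List.sizeOf_lt_of_mem t.2
      msubst σ th t.1))
  | .snap e => .snap (msubst σ th e)
  | .repl e1 e2 => .repl (msubst σ th e1) (msubst σ th e2)
  | .addr i => .addr i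
  | .img rules buf =>
      .img (rules.attach.map (fun r =>
          have h1 := List.sizeOf_lt_of_mem r.2
          have h2 := Prod.sizeOf_snd_lt r.1
          (r.1.1, msubst (fun y => if y ∈ patVars r.1.1 then none else σ y) none r.1.2)))
        (buf.attach.map (fun m =>
          have h1 := List.sizeOf_lt_of_mem m.2
          have h2 := Prod.sizeOf_snd_lt m.1
          (m.1.1, m.1.2.attach.map (fun w =>
            have h3 := List.sizeOf_lt_of_mem w.2
            msubst σ th w.1))))
  | .zero => .zero
  | .tabs a T e => .tabs a T (msubst σ th e)
  | .tapp e T => .tapp (msubst σ th e) T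
termination_by e => sizeOf e
decreasing_by
  all_goals simp_wf
  all_goals omega

/-- The small-step reduction relation `e | μ ⟶ e' | μ'` of CPL. -/
inductive Step : Expr → RT → Expr → RT → Prop
  | cong {E : ECtx} {e μ e' μ'} :
      Step e μ e' μ' → Step (E.plug e) μ (E.plug e') μ'
  | parFlat {e1 e2 e3 : List Expr} {μ} :
      Step (.par (e1 ++ .par e2 :: e3)) μ (.par (e1 ++ e2 ++ e3)) μ
  | rcv {μ : RT} {i x rules buf} {vs : List Expr} :
      μ i = some (.img rules buf) →
      (∀ v ∈ vs, IsValue v) →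
      Step (.req (.svc (.addr i) x) vs) μ (.par [])
        (Function.update μ i (some (.img rules (buf ++ [(x, vs)]))))
  | react {μ : RT} {i rules buf buf' σ} {pats : List TPat} {body : Expr}
      {es : List Expr} :
      μ i = some (.img rules buf) →
      (pats, body) ∈ rules →
      Match (stripPats pats) buf buf' σ →
      Step (.par es) μ (.par (es ++ [msubst σ (some (.addr i)) body]))
        (Function.update μ i (some (.img rules buf')))
  | spwn {μ : RT} {i s} :
      μ i = none → IsImage s →
      Step (.spwn s) μ (.addr i) (Function.update μ i (some s))
  | snap {μ : RT} {i s} :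
      μ i = some s → IsImage s →
      Step (.snap (.addr i)) μ s μ
  | repl {μ : RT} {i s} :
      μ i ≠ none → IsImage s →
      Step (.repl (.addr i) s) μ (.par []) (Function.update μ i (some s))
  | tappAbs {μ : RT} {a U e T} :
      Step (.tapp (.tabs a U e) T) μ (tsubstExpr a T e) μ

/-- Well-typedness of a routing table: `Γ | Σ ⊢ μ`. -/
def WTrt (Γ : Ctx) (L : LTy) (μ : RT) : Prop :=
  (∀ i, (μ i).isSome ↔ (L i).isSome) ∧
  (∀ i e T, μ i = some e → L i = some T → HasTy Γ L e T)

/-- Reflexive–transitive closure of reduction on configurations. -/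
def StepStar : Expr × RT → Expr × RT → Prop :=
  Relation.ReflTransGen (fun c c' => Step c.1 c.2 c'.1 c'.2)

theorem multiVS_cons (p : Pat) (ps : List Pat) (m : Msg) (mc : List Msg) :
    multiVS (p :: ps) (m :: mc) = unionVS (mkVS p.2 m.2) (multiVS ps mc) :=
  rfl

theorem _root_.List.Perm.append_cons_middle {α : Type*} {l₁ l₂ r₁ r₂ : List α} (a : α)
    (h : (l₁ ++ l₂).Perm (r₁ ++ r₂)) : (l₁ ++ a :: l₂).Perm (r₁ ++ a :: r₂) :=
  List.perm_middle.trans ((h.cons a).trans List.perm_middle.symm)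

/-- **Match soundness.** If `match(p̄, m̄) ⇓ (m̄_r, σ)`, then there is a
sequence of consumed messages `m̄_c` such that (1) `m̄_r ++ m̄_c` is a
permutation of `m̄`, (2) `m̄_c` has the same length as `p̄` and each consumed
message has the service name of the corresponding pattern and as many
arguments as the pattern has parameters, and (3) `σ = [ȳ_i := v̄_i]`. -/
theorem match_soundness {ps : List Pat} {ms mr : List Msg} {σ : VSubst}
    (h : Match ps ms mr σ) :
    ∃ mc : List Msg,
      (mr ++ mc).Perm ms ∧
      mc.length = ps.length ∧
      List.Forall₂ (fun (p : Pat) (m : Msg) =>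
        p.1 = m.1 ∧ p.2.length = m.2.length) ps mc ∧
      σ = multiVS ps mc := by
  induction h with
  | nil ms => exact ⟨[], by simp, rfl, .nil, rfl⟩
  | @cons x ys ps m1 m2 mr vs σr hlen _ _ ih =>
    obtain ⟨mc, hperm, hlen_mc, hshape, rfl⟩ := ih
    exact ⟨(x, vs) :: mc, hperm.append_cons_middle (x, vs), by simp [hlen_mc],
      .cons ⟨rfl, hlen.symm⟩ hshape, (multiVS_cons (x, ys) ps (x, vs) mc).symm⟩

end CPL
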